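/- Global complexity with cut negative spectrum: let f : E → ℝ be twice continuously differentiable with L-Lipschitz-continuous Hessian (L > 0) and bounded below by f* with f(x₀) > f*. Fix σ⁺, δ, δ₋ ≥ 0 and set η := σ⁺ + δ + δ₋ with η > 0. Let (x_k)_{k≥0} and (y_k)_{k≥1} be sequences such that for each k ≥ 0: ∇²f(x_k) = A₊ᵏ − A₋ᵏ with A₊ᵏ, A₋ᵏ symmetric positive semidefinite; H_k is symmetric positive semidefinite with ‖A₊ᵏ − H_k‖ ≤ σ⁺ + δ; P_k is an orthogonal projection with H_k∘P_k = H_k and ‖A₋ᵏ∘P_k‖ ≤ δ₋ and ‖(H_k − A₊ᵏ)∘P_k‖ ≤ σ⁺ + δ; the iterate satisfies ∇f(x_k) + (H_k + α_k I)(x_{k+1} − x_k) = 0 with α_k = (L/2)·‖x_{k+1} − x_k‖ + η; and y_{k+1} := x_k + P_k(x_{k+1} − x_k). Then for every ε > 0, setting K = ⌈2(f(x₀) − f*)·(3√(2L)·ε^{−3/2} + 16η·ε^{−2})⌉, it holds that min_{1 ≤ i ≤ K} ‖∇f(y_i)‖ ≤ ε. -/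

import Mathlib

open scoped RealInnerProductSpace
open Real Set

def IsSymmPSD {n : ℕ} (H : EuclideanSpace ℝ (Fin n) →L[ℝ] EuclideanSpace ℝ (Fin n)) : Prop :=
  (∀ u v, ⟪H u, v⟫ = ⟪u, H v⟫) ∧ ∀ u, 0 ≤ ⟪H u, u⟫

noncomputable def hess {n : ℕ} (f : EuclideanSpace ℝ (Fin n) → ℝ)
    (x : EuclideanSpace ℝ (Fin n)) :
    EuclideanSpace ℝ (Fin n) →L[ℝ] EuclideanSpace ℝ (Fin n) :=
  fderiv ℝ (gradient f) x

/-!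
Write `v = x_{k+1} - x_k`. The cubic upper model of `f` at `x_k` (Lipschitz Hessian), in which `A₋`
is dropped and `A₊` is replaced by `H` at the price `(σ⁺ + δ)‖v‖² ≤ η‖v‖²`, shows that each step
decreases `f` by at least `L/3 ‖v‖³ + η/2 ‖v‖²`. At `y_{k+1} = x_k + P v` the first-order Taylor
remainder, the step equation and `H P = H` give `‖∇f(y_{k+1})‖ ≤ L‖v‖² + 2η‖v‖`. Hence while the
gradients at the test points exceed `ε`, each step decreases `f` by more than `1/(2C)` with
`C = 3√(2L)/ε^{3/2} + 16η/ε²`, and `K ≥ 2(f(x₀) − f*)C` steps would take `f` below `f*`.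
-/

section Taylor

variable {F G : Type*} [NormedAddCommGroup F] [NormedSpace ℝ F] [NormedAddCommGroup G]
  [NormedSpace ℝ G]

theorem hasDerivAt_add_smul (x h : F) (t : ℝ) : HasDerivAt (fun t : ℝ => x + t • h) h t := by
  simpa using ((hasDerivAt_id t).smul_const h).const_add x

theorem norm_image_add_sub_sub_fderiv_le {g : F → G} (hg : Differentiable ℝ g) {L : ℝ}
    (hLip : ∀ x y, ‖fderiv ℝ g x - fderiv ℝ g y‖ ≤ L * ‖x - y‖) (x h : F) :
    ‖g (x + h) - g x - fderiv ℝ g x h‖ ≤ L / 2 * ‖h‖ ^ 2 := by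
  set ψ : ℝ → G := fun t => g (x + t • h) - g x - t • fderiv ℝ g x h
  have hψ : ∀ t, HasDerivAt ψ (fderiv ℝ g (x + t • h) h - fderiv ℝ g x h) t := fun t =>
    (((hg _).hasFDerivAt.comp_hasDerivAt t (hasDerivAt_add_smul x h t)).sub_const _).sub
      (by simpa using (hasDerivAt_id t).smul_const (fderiv ℝ g x h))
  have hB : ∀ t, HasDerivAt (fun t => L / 2 * ‖h‖ ^ 2 * t ^ 2) (L * ‖h‖ ^ 2 * t) t := fun t =>
    ((hasDerivAt_pow 2 t).const_mul _).congr_deriv (by ring)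
  have hψ' : ∀ t ∈ Set.Ico (0 : ℝ) 1,
      ‖fderiv ℝ g (x + t • h) h - fderiv ℝ g x h‖ ≤ L * ‖h‖ ^ 2 * t := fun t ht =>
    calc ‖fderiv ℝ g (x + t • h) h - fderiv ℝ g x h‖
        ≤ ‖fderiv ℝ g (x + t • h) - fderiv ℝ g x‖ * ‖h‖ :=
          (fderiv ℝ g (x + t • h) - fderiv ℝ g x).le_opNorm h
      _ ≤ L * ‖t • h‖ * ‖h‖ := by
          gcongr; simpa using hLip (x + t • h) x
      _ = L * ‖h‖ ^ 2 * t := by rw [norm_smul, Real.norm_of_nonneg ht.1]; ring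
  simpa [ψ] using image_norm_le_of_norm_deriv_right_le_deriv_boundary
    (fun t _ => (hψ t).continuousAt.continuousWithinAt) (fun t _ => (hψ t).hasDerivWithinAt)
    (by simp [ψ]) hB hψ' (Set.right_mem_Icc.mpr zero_le_one)

end Taylor

section Gradient

variable {F : Type*} [NormedAddCommGroup F] [InnerProductSpace ℝ F] [CompleteSpace F] {f : F → ℝ}

theorem ContDiff.differentiable_gradient (hf : ContDiff ℝ 2 f) :
    Differentiable ℝ (gradient f) :=
  (InnerProductSpace.toDual ℝ F).symm.differentiable.comp
    ((hf.fderiv_right (by norm_num)).differentiable one_ne_zero)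

theorem image_add_le_cubic_model (hf : Differentiable ℝ f) (hg : Differentiable ℝ (gradient f))
    {L : ℝ} (hLip : ∀ x y, ‖fderiv ℝ (gradient f) x - fderiv ℝ (gradient f) y‖ ≤ L * ‖x - y‖)
    (x h : F) :
    f (x + h) ≤ f x + ⟪gradient f x, h⟫ + 1 / 2 * ⟪fderiv ℝ (gradient f) x h, h⟫
      + L / 6 * ‖h‖ ^ 3 := by
  set φ : ℝ → ℝ := fun t =>
    f (x + t • h) - f x - t * ⟪gradient f x, h⟫ - t ^ 2 / 2 * ⟪fderiv ℝ (gradient f) x h, h⟫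
  have hφ : ∀ t, HasDerivAt φ
      ⟪gradient f (x + t • h) - gradient f x - t • fderiv ℝ (gradient f) x h, h⟫ t := by
    intro t
    have hline := (hf _).hasFDerivAt.comp_hasDerivAt t (hasDerivAt_add_smul x h t)
    rw [← inner_gradient_left] at hline
    have := ((hline.sub_const (f x)).sub ((hasDerivAt_id t).mul_const ⟪gradient f x, h⟫)).sub
      (((hasDerivAt_pow 2 t).div_const 2).mul_const ⟪fderiv ℝ (gradient f) x h, h⟫)
    refine this.congr_deriv ?_
    simp only [inner_sub_left, real_inner_smul_left]
    ring
  have hB : ∀ t, HasDerivAt (fun t => L / 6 * ‖h‖ ^ 3 * t ^ 3) (L / 2 * ‖h‖ ^ 3 * t ^ 2) t :=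
    fun t => ((hasDerivAt_pow 3 t).const_mul _).congr_deriv (by ring)
  have hφ' : ∀ t ∈ Set.Ico (0 : ℝ) 1,
      ‖⟪gradient f (x + t • h) - gradient f x - t • fderiv ℝ (gradient f) x h, h⟫‖
        ≤ L / 2 * ‖h‖ ^ 3 * t ^ 2 := fun t ht =>
    calc _ ≤ ‖gradient f (x + t • h) - gradient f x - fderiv ℝ (gradient f) x (t • h)‖ * ‖h‖ := by
          rw [map_smul]; exact norm_inner_le_norm _ _
      _ ≤ L / 2 * ‖t • h‖ ^ 2 * ‖h‖ := by
          gcongr; exact norm_image_add_sub_sub_fderiv_le hg hLip x (t • h)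
      _ = L / 2 * ‖h‖ ^ 3 * t ^ 2 := by rw [norm_smul, Real.norm_of_nonneg ht.1]; ring
  have := image_norm_le_of_norm_deriv_right_le_deriv_boundary
    (fun t _ => (hφ t).continuousAt.continuousWithinAt) (fun t _ => (hφ t).hasDerivWithinAt)
    (by simp [φ]) hB hφ' (Set.right_mem_Icc.mpr zero_le_one)
  simp only [φ, one_smul, one_mul, one_pow, Real.norm_eq_abs] at this
  linarith [(abs_le.mp this).2]

def IsRegularizedNewtonStep (f : F → ℝ) (L η : ℝ) (H : F →L[ℝ] F) (x v : F) : Prop :=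
  gradient f x + H v + (L / 2 * ‖v‖ + η) • v = 0

variable {L η c : ℝ} {H Ap Am : F →L[ℝ] F} {x v : F}

theorem IsRegularizedNewtonStep.gradient_eq (hstep : IsRegularizedNewtonStep f L η H x v) :
    gradient f x = -(H v + (L / 2 * ‖v‖ + η) • v) := by
  rw [IsRegularizedNewtonStep, add_assoc] at hstep
  exact eq_neg_of_add_eq_zero_left hstep

theorem IsRegularizedNewtonStep.sufficient_decrease (hstep : IsRegularizedNewtonStep f L η H x v)
    (hf : Differentiable ℝ f) (hg : Differentiable ℝ (gradient f))
    (hLip : ∀ x y, ‖fderiv ℝ (gradient f) x - fderiv ℝ (gradient f) y‖ ≤ L * ‖x - y‖)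
    (hdecomp : fderiv ℝ (gradient f) x = Ap - Am) (hAm : ∀ u, 0 ≤ ⟪Am u, u⟫)
    (hH : ∀ u, 0 ≤ ⟪H u, u⟫) (hHerr : ‖Ap - H‖ ≤ c) (hcη : c ≤ η) :
    f (x + v) ≤ f x - L / 3 * ‖v‖ ^ 3 - η / 2 * ‖v‖ ^ 2 := by
  have hgrad : ⟪gradient f x, v⟫ = -⟪H v, v⟫ - (L / 2 * ‖v‖ + η) * ‖v‖ ^ 2 := by
    rw [hstep.gradient_eq, inner_neg_left, inner_add_left, real_inner_smul_left,
      real_inner_self_eq_norm_sq]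
    ring
  have hcurv : ⟪fderiv ℝ (gradient f) x v, v⟫ ≤ ⟪H v, v⟫ + c * ‖v‖ ^ 2 := by
    have herr : ⟪(Ap - H) v, v⟫ ≤ c * ‖v‖ ^ 2 :=
      calc ⟪(Ap - H) v, v⟫ ≤ ‖Ap - H‖ * ‖v‖ * ‖v‖ :=
            (real_inner_le_norm _ _).trans (by gcongr; exact (Ap - H).le_opNorm v)
        _ ≤ c * ‖v‖ ^ 2 := by rw [mul_assoc, ← sq]; gcongr
    rw [hdecomp, sub_apply, inner_sub_left]
    rw [sub_apply, inner_sub_left] at herr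
    linarith [hAm v]
  have hcv : c * ‖v‖ ^ 2 ≤ η * ‖v‖ ^ 2 := by gcongr
  linarith [image_add_le_cubic_model hf hg hLip x v, hH v]

theorem IsRegularizedNewtonStep.norm_gradient_add_le (hstep : IsRegularizedNewtonStep f L η H x v)
    (hg : Differentiable ℝ (gradient f))
    (hLip : ∀ x y, ‖fderiv ℝ (gradient f) x - fderiv ℝ (gradient f) y‖ ≤ L * ‖x - y‖)
    (hL : 0 ≤ L) (hη : 0 ≤ η) (hdecomp : fderiv ℝ (gradient f) x = Ap - Am)
    {P : F →L[ℝ] F} {δm : ℝ} (hP : ‖P‖ ≤ 1) (hHP : H.comp P = H) (hAmP : ‖Am.comp P‖ ≤ δm)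
    (hHApP : ‖(H - Ap).comp P‖ ≤ c) (hcη : c + δm ≤ η) :
    ‖gradient f (x + P v)‖ ≤ L * ‖v‖ ^ 2 + 2 * η * ‖v‖ := by
  set R := gradient f (x + P v) - gradient f x - fderiv ℝ (gradient f) x (P v)
  have hsplit : gradient f (x + P v)
      = R - (L / 2 * ‖v‖ + η) • v - (H - Ap).comp P v - Am.comp P v := by
    have hHPv : H (P v) = H v := congr($hHP v)
    simp only [R, hstep.gradient_eq, hdecomp, ContinuousLinearMap.comp_apply,
      sub_apply, hHPv]
    abel
  have hR : ‖R‖ ≤ L / 2 * ‖v‖ ^ 2 :=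
    calc ‖R‖ ≤ L / 2 * ‖P v‖ ^ 2 := norm_image_add_sub_sub_fderiv_le hg hLip x (P v)
      _ ≤ L / 2 * ‖v‖ ^ 2 := by gcongr; exact P.le_of_opNorm_le hP v |>.trans_eq (one_mul _)
  have hα : ‖(L / 2 * ‖v‖ + η) • v‖ = (L / 2 * ‖v‖ + η) * ‖v‖ := by
    rw [norm_smul, Real.norm_of_nonneg (by positivity)]
  have hHAp : ‖(H - Ap).comp P v‖ ≤ c * ‖v‖ := ((H - Ap).comp P).le_of_opNorm_le hHApP v
  have hAmv : ‖Am.comp P v‖ ≤ δm * ‖v‖ := (Am.comp P).le_of_opNorm_le hAmP v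
  have hcv : (c + δm) * ‖v‖ ≤ η * ‖v‖ := by gcongr
  calc ‖gradient f (x + P v)‖
      ≤ ‖R‖ + ‖(L / 2 * ‖v‖ + η) • v‖ + ‖(H - Ap).comp P v‖ + ‖Am.comp P v‖ := by
        rw [hsplit]
        refine (norm_sub_le _ _).trans (add_le_add_left ((norm_sub_le _ _).trans ?_) _)
        exact add_le_add_left (norm_sub_le _ _) _
    _ ≤ L * ‖v‖ ^ 2 + 2 * η * ‖v‖ := by rw [hα]; linarith

end Gradient

theorem inv_lt_cubic_decrease_of_lt {L η ε r : ℝ} (hL : 0 < L) (hη : 0 < η) (hε : 0 < ε)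
    (hr : 0 ≤ r) (h : ε < L * r ^ 2 + 2 * η * r) :
    (2 * (3 * √(2 * L) / ε ^ ((3 : ℝ) / 2) + 16 * η / ε ^ 2))⁻¹
      < L / 3 * r ^ 3 + η / 2 * r ^ 2 := by
  rw [inv_lt_iff_one_lt_mul₀' (by positivity)]
  set s := √ε
  set q := √(2 * L)
  have hs : 0 < s := Real.sqrt_pos.mpr hε
  have hq : 0 < q := Real.sqrt_pos.mpr (by positivity)
  have hs2 : s ^ 2 = ε := Real.sq_sqrt hε.le
  have hq2 : q ^ 2 = 2 * L := Real.sq_sqrt (by positivity)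
  have hε32 : ε ^ ((3 : ℝ) / 2) = s ^ 3 := by
    rw [show s = ε ^ (1 / 2 : ℝ) from Real.sqrt_eq_rpow ε, ← Real.rpow_natCast,
      ← Real.rpow_mul hε.le]; norm_num
  have hcubic : 2 * (3 * q / s ^ 3) * (L / 3 * r ^ 3) = (q * r / s) ^ 3 := by
    field_simp; rw [hq2]
  have hquad : 2 * (16 * η / ε ^ 2) * (η / 2 * r ^ 2) = (4 * η * r / ε) ^ 2 := by
    field_simp; ring
  rw [hε32]
  -- Drop the cross terms of the product: the cubic term exceeds `1` when `ε/2 < L r²`,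
  -- the quadratic one when `ε/2 < 2ηr`.
  have : 0 ≤ 3 * q / s ^ 3 := by positivity
  have : 0 ≤ 16 * η / ε ^ 2 := by positivity
  have : 0 ≤ L / 3 * r ^ 3 := by positivity
  have : 0 ≤ η / 2 * r ^ 2 := by positivity
  rcases lt_or_ge (ε / 2) (L * r ^ 2) with hcase | hcase
  · have hsqr : s < q * r := by
      apply lt_of_pow_lt_pow_left₀ 2 (by positivity)
      rw [hs2, mul_pow, hq2]; linarith
    have : 1 < (q * r / s) ^ 3 := one_lt_pow₀ ((one_lt_div hs).mpr hsqr) (by norm_num)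
    nlinarith
  · have : 1 < 4 * η * r / ε := (one_lt_div hε).mpr (by linarith)
    have : 1 < (4 * η * r / ε) ^ 2 := one_lt_pow₀ this (by norm_num)
    nlinarith

theorem lt_sub_mul_of_forall_lt_sub {u : ℕ → ℝ} {Δ : ℝ} {K : ℕ} (hK : 0 < K)
    (h : ∀ k < K, u (k + 1) < u k - Δ) : u K < u 0 - K * Δ := by
  have := Finset.sum_lt_sum_of_nonempty (Finset.nonempty_range_iff.mpr hK.ne')
    (f := fun k => u (k + 1) - u k) (g := fun _ => -Δ)
    fun k hk => by linarith [h k (Finset.mem_range.mp hk)]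
  rw [Finset.sum_range_sub, Finset.sum_const, Finset.card_range, nsmul_eq_mul] at this
  linarith

theorem global_complexity_cut_negative_spectrum_general {n : ℕ}
    (f : EuclideanSpace ℝ (Fin n) → ℝ) (hf : ContDiff ℝ 2 f)
    (L : ℝ) (hL : 0 < L)
    (hLip : ∀ x y, ‖hess f x - hess f y‖ ≤ L * ‖x - y‖)
    (fstar : ℝ) (hbdd : ∀ z, fstar ≤ f z)
    (σp δ δm : ℝ) (hδm : 0 ≤ δm)
    (η : ℝ) (hη : η = σp + δ + δm) (hηpos : 0 < η)
    (x : ℕ → EuclideanSpace ℝ (Fin n))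
    (y : ℕ → EuclideanSpace ℝ (Fin n))
    (hx0 : fstar < f (x 0))
    (Ap Am H P : ℕ → EuclideanSpace ℝ (Fin n) →L[ℝ] EuclideanSpace ℝ (Fin n))
    (hAm : ∀ k, IsSymmPSD (Am k))
    (hdecomp : ∀ k, hess f (x k) = Ap k - Am k)
    (hH : ∀ k, IsSymmPSD (H k))
    (hHerr : ∀ k, ‖Ap k - H k‖ ≤ σp + δ)
    (hPsym : ∀ k u v, ⟪P k u, v⟫ = ⟪u, P k v⟫)
    (hPidem : ∀ k, (P k).comp (P k) = P k)
    (hHP : ∀ k, (H k).comp (P k) = H k)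
    (hAmP : ∀ k, ‖(Am k).comp (P k)‖ ≤ δm)
    (hHApP : ∀ k, ‖(H k - Ap k).comp (P k)‖ ≤ σp + δ)
    (α : ℕ → ℝ)
    (hα : ∀ k, α k = L / 2 * ‖x (k + 1) - x k‖ + η)
    (hstep : ∀ k, gradient f (x k) + (H k) (x (k + 1) - x k)
      + α k • (x (k + 1) - x k) = 0)
    (hy : ∀ k, y (k + 1) = x k + (P k) (x (k + 1) - x k))
    (ε : ℝ) (hε : 0 < ε)
    (K : ℕ)
    (hK : K = ⌈2 * (f (x 0) - fstar) *
        (3 * Real.sqrt (2 * L) / ε ^ ((3 : ℝ) / 2) + 16 * η / ε ^ 2)⌉₊) :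
    ∃ i, 1 ≤ i ∧ i ≤ K ∧ ‖gradient f (y i)‖ ≤ ε := by
  by_contra! hcon
  set C := 3 * √(2 * L) / ε ^ ((3 : ℝ) / 2) + 16 * η / ε ^ 2
  have hC : 0 < C := by positivity
  have hdesc : ∀ k < K, f (x (k + 1)) < f (x k) - (2 * C)⁻¹ := by
    intro k hk
    set v := x (k + 1) - x k
    have hstep' : IsRegularizedNewtonStep f L η (H k) (x k) v := by
      rw [IsRegularizedNewtonStep, ← hα]; exact hstep k
    have hdec : f (x (k + 1)) ≤ f (x k) - L / 3 * ‖v‖ ^ 3 - η / 2 * ‖v‖ ^ 2 := by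
      simpa [v] using hstep'.sufficient_decrease (hf.differentiable (by norm_num))
        hf.differentiable_gradient hLip (hdecomp k) (hAm k).2 (hH k).2 (hHerr k) (by linarith)
    have hP : ‖P k‖ ≤ 1 := IsStarProjection.norm_le (P k)
      ⟨hPidem k, ContinuousLinearMap.isSelfAdjoint_iff_isSymmetric.mpr (hPsym k)⟩
    have hgrad : ‖gradient f (y (k + 1))‖ ≤ L * ‖v‖ ^ 2 + 2 * η * ‖v‖ := hy k ▸
      hstep'.norm_gradient_add_le hf.differentiable_gradient hLip hL.le hηpos.le (hdecomp k) hP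
        (hHP k) (hAmP k) (hHApP k) hη.ge
    linarith [inv_lt_cubic_decrease_of_lt hL hηpos hε (norm_nonneg v)
      ((hcon (k + 1) (by omega) hk).trans_le hgrad)]
  have hK0 : 0 < K := hK ▸ Nat.ceil_pos.mpr (by have := sub_pos.mpr hx0; positivity)
  have hKC : 2 * (f (x 0) - fstar) * C ≤ K := hK ▸ Nat.le_ceil _
  have hfK := lt_sub_mul_of_forall_lt_sub (u := fun k => f (x k)) hK0 hdesc
  have hgap : f (x 0) - fstar ≤ K * (2 * C)⁻¹ := by
    rw [← div_eq_mul_inv, le_div_iff₀ (by positivity)]; linarith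
  linarith [hbdd (x K)]

/-- Global complexity with cut negative spectrum: after
`K = ⌈2(f(x₀) − f*)(3√(2L)/ε^{3/2} + 16η/ε²)⌉` iterations of the method with cubic
step size and projected test points `y_k`, one of `y_1, …, y_K` has gradient norm
at most `ε`. -/
theorem global_complexity_cut_negative_spectrum {n : ℕ}
    (f : EuclideanSpace ℝ (Fin n) → ℝ) (hf : ContDiff ℝ 2 f)
    (L : ℝ) (hL : 0 < L)
    (hLip : ∀ x y, ‖hess f x - hess f y‖ ≤ L * ‖x - y‖)
    (fstar : ℝ) (hbdd : ∀ z, fstar ≤ f z)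
    (σp δ δm : ℝ) (hσp : 0 ≤ σp) (hδ : 0 ≤ δ) (hδm : 0 ≤ δm)
    (η : ℝ) (hη : η = σp + δ + δm) (hηpos : 0 < η)
    (x : ℕ → EuclideanSpace ℝ (Fin n))
    (y : ℕ → EuclideanSpace ℝ (Fin n))
    (hx0 : fstar < f (x 0))
    (Ap Am H P : ℕ → EuclideanSpace ℝ (Fin n) →L[ℝ] EuclideanSpace ℝ (Fin n))
    (hAp : ∀ k, IsSymmPSD (Ap k)) (hAm : ∀ k, IsSymmPSD (Am k))
    (hdecomp : ∀ k, hess f (x k) = Ap k - Am k)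
    (hH : ∀ k, IsSymmPSD (H k))
    (hHerr : ∀ k, ‖Ap k - H k‖ ≤ σp + δ)
    (hPsym : ∀ k u v, ⟪P k u, v⟫ = ⟪u, P k v⟫)
    (hPidem : ∀ k, (P k).comp (P k) = P k)
    (hHP : ∀ k, (H k).comp (P k) = H k)
    (hAmP : ∀ k, ‖(Am k).comp (P k)‖ ≤ δm)
    (hHApP : ∀ k, ‖(H k - Ap k).comp (P k)‖ ≤ σp + δ)
    (α : ℕ → ℝ)
    (hα : ∀ k, α k = L / 2 * ‖x (k + 1) - x k‖ + η)
    (hstep : ∀ k, gradient f (x k) + (H k) (x (k + 1) - x k)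
      + α k • (x (k + 1) - x k) = 0)
    (hy : ∀ k, y (k + 1) = x k + (P k) (x (k + 1) - x k))
    (ε : ℝ) (hε : 0 < ε)
    (K : ℕ)
    (hK : K = ⌈2 * (f (x 0) - fstar) *
        (3 * Real.sqrt (2 * L) / ε ^ ((3 : ℝ) / 2) + 16 * η / ε ^ 2)⌉₊) :
    ∃ i, 1 ≤ i ∧ i ≤ K ∧ ‖gradient f (y i)‖ ≤ ε :=
  global_complexity_cut_negative_spectrum_general f hf L hL hLip fstar hbdd σp δ δm hδm η hη hηpos x
    y hx0 Ap Am H P hAm hdecomp hH hHerr hPsym hPidem hHP hAmP hHApP α hα hstep hy ε hε K hK
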